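/- The function x ↦ (x·R(x,x) - 2)/x² is strictly increasing on (0, ∞) with range (-π²/3, 0), where R(x,x) = -2ψ(x) - 2γ. -/

import Mathlib

noncomputable def digamma (x : ℝ) : ℝ := deriv (fun y : ℝ => Real.log (Real.Gamma y)) x

noncomputable def Rxx (x : ℝ) : ℝ := -2 * digamma x - 2 * Real.eulerMascheroniConstant

/-!
For `x > 0`, `(x * R(x,x) - 2) / x² = -2 (ψ(x + 1) + γ) / x`, and the partial fraction expansion
`ψ(x + 1) + γ = ∑ₙ x / ((n + 1)(n + 1 + x))` turns this into `-2 ∑ₙ 1 / ((n + 1)(n + 1 + x))`.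
Each term decreases strictly in `x`, and the series is dominated by `∑ₙ 1 / (n + 1)² = π² / 6`,
so it is continuous on `[0, ∞)`, tends to `0` at infinity and equals `π² / 6` at `0`.
The expansion itself comes from `ψ(x + 1) = ψ(x) + 1 / x` and the convexity of `log ∘ Γ`,
which squeezes `ψ(x + n)` between `log (x + n - 1)` and `log (x + n)`.
-/

open Real Filter Topology Set

lemma image_Ioi_eq_Ioo_of_strictMonoOn_Ici {α δ : Type*} [ConditionallyCompleteLinearOrder α]
    [TopologicalSpace α] [OrderTopology α] [DenselyOrdered α] [NoMaxOrder α]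
    [LinearOrder δ] [TopologicalSpace δ] [OrderClosedTopology δ]
    {f : α → δ} {a : α} {l : δ} (hmono : StrictMonoOn f (Ici a)) (hcont : ContinuousOn f (Ici a))
    (htop : Tendsto f atTop (𝓝 l)) : f '' Ioi a = Ioo (f a) l := by
  apply Subset.antisymm
  · rintro _ ⟨x, hx, rfl⟩
    obtain ⟨y, hxy⟩ := exists_gt x
    have hx' : x ∈ Ici a := mem_Ici.2 hx.le
    have hy : y ∈ Ici a := mem_Ici.2 (hx.trans hxy).le
    refine ⟨hmono self_mem_Ici hx' hx, (hmono hx' hy hxy).trans_le ?_⟩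
    refine ge_of_tendsto htop ?_
    filter_upwards [eventually_ge_atTop y] with z hz
    exact hmono.monotoneOn hy (mem_Ici.2 (le_trans hy hz)) hz
  · rintro t ⟨hat, htl⟩
    obtain ⟨b, hbt, hab⟩ :=
      ((htop.eventually (eventually_gt_nhds htl)).and (eventually_gt_atTop a)).exists
    obtain ⟨x, hx, rfl⟩ := intermediate_value_Ioo hab.le (hcont.mono Icc_subset_Ici_self) ⟨hat, hbt⟩
    exact ⟨x, hx.1, rfl⟩

lemma differentiableAt_log_Gamma {x : ℝ} (hx : 0 < x) :
    DifferentiableAt ℝ (fun y : ℝ => log (Gamma y)) x := by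
  refine (differentiableAt_Gamma ?_).log (Gamma_ne_zero ?_) <;>
  exact fun m => ((neg_nonpos.mpr m.cast_nonneg).trans_lt hx).ne'

lemma log_Gamma_add_one {x : ℝ} (hx : 0 < x) : log (Gamma (x + 1)) = log x + log (Gamma x) := by
  rw [Gamma_add_one hx.ne', log_mul hx.ne' (Gamma_pos_of_pos hx).ne']

lemma digamma_add_one {x : ℝ} (hx : 0 < x) : digamma (x + 1) = digamma x + x⁻¹ := by
  unfold digamma
  rw [← deriv_comp_add_const, ← deriv_log, add_comm,
    ← deriv_add (differentiableAt_log hx.ne') (differentiableAt_log_Gamma hx)]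
  apply EventuallyEq.deriv_eq
  filter_upwards [eventually_gt_nhds hx] with y hy using log_Gamma_add_one hy

lemma digamma_add_nat {x : ℝ} (hx : 0 < x) (n : ℕ) :
    digamma (x + n) = digamma x + ∑ k ∈ Finset.range n, (x + k)⁻¹ := by
  induction n with
  | zero => simp
  | succ n ih =>
    rw [Nat.cast_succ, ← add_assoc, digamma_add_one (by positivity), ih, Finset.sum_range_succ,
      add_assoc]

-- The slopes of the convex function `log ∘ Gamma` over `[y, y + 1]` and `[y + 1, y + 2]` are
-- `log y` and `log (y + 1)`, and they bracket its derivative at `y + 1`.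
lemma slope_log_Gamma {y : ℝ} (hy : 0 < y) : slope (log ∘ Gamma) y (y + 1) = log y := by
  rw [slope_def_field, Function.comp_apply, Function.comp_apply, log_Gamma_add_one hy]
  ring

lemma log_le_digamma_add_one {y : ℝ} (hy : 0 < y) : log y ≤ digamma (y + 1) :=
  slope_log_Gamma hy ▸ convexOn_log_Gamma.slope_le_deriv (mem_Ioi.2 hy) (mem_Ioi.2 (by linarith))
    (by linarith) (differentiableAt_log_Gamma (by linarith))

lemma digamma_le_log {y : ℝ} (hy : 0 < y) : digamma y ≤ log y :=
  slope_log_Gamma hy ▸ convexOn_log_Gamma.deriv_le_slope (mem_Ioi.2 hy) (mem_Ioi.2 (by linarith))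
    (by linarith) (differentiableAt_log_Gamma hy)

lemma tendsto_digamma_add_nat_sub_log (x : ℝ) :
    Tendsto (fun n : ℕ => digamma (x + n) - log n) atTop (𝓝 0) := by
  have hlog (c : ℝ) : Tendsto (fun n : ℕ => log (c + n) - log n) atTop (𝓝 0) := by
    refine ((tendsto_log_comp_add_sub_log c).comp tendsto_natCast_atTop_atTop).congr fun n => ?_
    rw [Function.comp_apply, add_comm]
  have hlarge : ∀ᶠ n : ℕ in atTop, 1 < x + n :=
    (tendsto_natCast_atTop_atTop.eventually_gt_atTop (1 - x)).mono fun n hn => by linarith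
  refine tendsto_of_tendsto_of_tendsto_of_le_of_le' (hlog (x - 1)) (hlog x) ?_ ?_
  · filter_upwards [hlarge] with n hn
    have := log_le_digamma_add_one (y := x - 1 + n) (by linarith)
    rw [show x - 1 + n + 1 = x + n by ring] at this
    linarith
  · filter_upwards [hlarge] with n hn
    linarith [digamma_le_log (y := x + n) (by linarith)]

lemma hasSum_digamma_add_one {x : ℝ} (hx : 0 < x) :
    HasSum (fun n : ℕ => x / ((n + 1) * (n + 1 + x)))
      (digamma (x + 1) + eulerMascheroniConstant) := by
  rw [hasSum_iff_tendsto_nat_of_nonneg fun n => by positivity]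
  have hpartial (n : ℕ) : ∑ k ∈ Finset.range n, x / ((k + 1) * (k + 1 + x)) =
      (harmonic n - log n) - (digamma (x + 1 + n) - log n) + digamma (x + 1) := by
    have hterm (k : ℕ) : x / ((k + 1) * (k + 1 + x)) = (k + 1 : ℝ)⁻¹ - (x + 1 + k)⁻¹ := by
      field_simp
      ring
    simp only [hterm, Finset.sum_sub_distrib, digamma_add_nat (by positivity : 0 < x + 1),
      harmonic, Rat.cast_sum, Rat.cast_inv]
    push_cast
    ring
  simp only [hpartial]
  have h := (tendsto_harmonic_sub_log.sub (tendsto_digamma_add_nat_sub_log (x + 1))).add_const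
    (digamma (x + 1))
  rwa [sub_zero, add_comm eulerMascheroniConstant] at h

lemma hasSum_inv_nat_add_one_sq : HasSum (fun n : ℕ => ((n + 1 : ℝ) ^ 2)⁻¹) (π ^ 2 / 6) := by
  simpa [one_div] using (hasSum_nat_add_iff' 1).2 hasSum_zeta_two

-- For `x > 0` this is `(ψ(x + 1) - ψ(1)) / x` by `digammaSlope_eq` and `ψ(1) = -γ`.
noncomputable def digammaSlope (x : ℝ) : ℝ := ∑' n : ℕ, ((n + 1) * (n + 1 + x))⁻¹

lemma norm_inv_mul_add_le {x : ℝ} (hx : 0 ≤ x) (n : ℕ) :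
    ‖((n + 1) * (n + 1 + x) : ℝ)⁻¹‖ ≤ ((n + 1 : ℝ) ^ 2)⁻¹ := by
  rw [norm_inv, Real.norm_of_nonneg (by positivity), sq]
  exact inv_anti₀ (by positivity) (mul_le_mul_of_nonneg_left (by linarith) (by positivity))

lemma summable_inv_mul_add {x : ℝ} (hx : 0 ≤ x) :
    Summable fun n : ℕ => ((n + 1) * (n + 1 + x) : ℝ)⁻¹ :=
  hasSum_inv_nat_add_one_sq.summable.of_norm_bounded (norm_inv_mul_add_le hx)

lemma digammaSlope_zero : digammaSlope 0 = π ^ 2 / 6 := by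
  simpa only [digammaSlope, add_zero, sq] using hasSum_inv_nat_add_one_sq.tsum_eq

lemma digammaSlope_eq {x : ℝ} (hx : 0 < x) :
    digammaSlope x = (digamma (x + 1) + eulerMascheroniConstant) / x := by
  rw [div_eq_inv_mul, ← ((hasSum_digamma_add_one hx).mul_left x⁻¹).tsum_eq, digammaSlope]
  congr 1 with n
  field_simp

lemma strictAntiOn_digammaSlope : StrictAntiOn digammaSlope (Ici 0) := by
  intro x (hx : 0 ≤ x) y (hy : 0 ≤ y) hxy
  have hlt (n : ℕ) : ((n + 1) * (n + 1 + y) : ℝ)⁻¹ < ((n + 1) * (n + 1 + x))⁻¹ := by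
    gcongr
  exact (summable_inv_mul_add hx).tsum_lt_tsum_of_nonneg (fun n => by positivity)
    (fun n => (hlt n).le) (hlt 0)

lemma continuousOn_digammaSlope : ContinuousOn digammaSlope (Ici 0) :=
  continuousOn_tsum (fun n => ContinuousOn.inv₀ (by fun_prop) fun x (hx : 0 ≤ x) => by positivity)
    hasSum_inv_nat_add_one_sq.summable fun n _ hx => norm_inv_mul_add_le hx n

lemma tendsto_digammaSlope_atTop : Tendsto digammaSlope atTop (𝓝 0) := by
  rw [← tsum_zero]
  refine tendsto_tsum_of_dominated_convergence hasSum_inv_nat_add_one_sq.summable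
    (fun n => tendsto_inv_atTop_zero.comp ?_) ?_
  · exact Tendsto.const_mul_atTop (by positivity) (tendsto_atTop_add_const_left _ _ tendsto_id)
  · filter_upwards [eventually_ge_atTop 0] with x hx n using norm_inv_mul_add_le hx n

lemma mul_Rxx_sub_two_div_sq {x : ℝ} (hx : 0 < x) :
    (x * Rxx x - 2) / x ^ 2 = -2 * digammaSlope x := by
  rw [digammaSlope_eq hx, digamma_add_one hx, Rxx]
  field_simp
  ring

theorem stmt_16 :
    StrictMonoOn (fun x : ℝ => (x * Rxx x - 2) / x ^ 2) (Set.Ioi 0) ∧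
      (fun x : ℝ => (x * Rxx x - 2) / x ^ 2) '' Set.Ioi 0 =
        Set.Ioo (-(Real.pi ^ 2 / 3)) 0 := by
  have hEq : EqOn (fun x : ℝ => (x * Rxx x - 2) / x ^ 2) (fun x => -2 * digammaSlope x) (Ioi 0) :=
    fun x hx => mul_Rxx_sub_two_div_sq hx
  have hmono : StrictMonoOn (fun x => -2 * digammaSlope x) (Ici 0) :=
    fun x hx y hy hxy => by linarith [strictAntiOn_digammaSlope hx hy hxy]
  refine ⟨(hmono.mono Ioi_subset_Ici_self).congr hEq.symm, ?_⟩
  rw [hEq.image_eq, image_Ioi_eq_Ioo_of_strictMonoOn_Ici hmono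
    (continuousOn_const.mul continuousOn_digammaSlope)
    (by simpa using tendsto_digammaSlope_atTop.const_mul (-2 : ℝ)), digammaSlope_zero]
  ring_nf
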